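/- arXiv:math/9804005 — 2 statements merged into one kernel-verified Lean document; each statement's English description precedes it below -/
import Mathlib

section
/- Let M be a ℤ-graded module over the polynomial ring k[t]: M is a k[t]-module equipped with k-submodules (M_i)_{i∈ℤ} forming an internal direct sum decomposition M = ⊕_{i∈ℤ} M_i and satisfying t·M_i ⊆ M_{i+1} for all i. Let N ⊆ M be a graded k[t]-submodule, i.e. N = ⊕_{i∈ℤ} (N ∩ M_i). Then N ∩ (t−1)·M = (t−1)·N; consequently, the functor sending a graded k[t]-module M to M/(t−1)M is exact: for any inclusion N ⊆ M of graded k[t]-modules the induced map N/(t−1)N → M/(t−1)M is injective. -/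
/-!
Write `mᵢ` for the homogeneous components of `m`. Since `t` raises degrees by one, the degree
`i + 1` component of `(t - 1) • m` is `t • mᵢ - mᵢ₊₁`. If `(t - 1) • m ∈ N`, these components lie
in `N` because `N` is graded, so `mᵢ ∈ N` implies `mᵢ₊₁ ∈ N`; starting below the (finite) support
of `m`, every `mᵢ` lies in `N`, hence so does `m`. Both claims follow formally from this
cancellation property of `t - 1` on `N`.
-/

universe u

open DirectSum

section GradedShift

variable {M σ : Type*} [AddCommGroup M] [SetLike σ M] [AddSubgroupClass σ M]
  (ℳ : ℤ → σ) [Decomposition ℳ]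

theorem DirectSum.decompose_apply_add_one_of_mapsTo {f : M →+ M}
    (hf : ∀ i, ∀ x ∈ ℳ i, f x ∈ ℳ (i + 1)) (m : M) (i : ℤ) :
    (decompose ℳ (f m) (i + 1) : M) = f (decompose ℳ m i) := by
  induction m using Decomposition.inductionOn ℳ with
  | zero => simp
  | @homogeneous j x =>
    rcases eq_or_ne j i with rfl | hji
    · rw [decompose_of_mem_same ℳ (hf j x x.2), decompose_of_mem_same ℳ x.2]
    · rw [decompose_of_mem_ne ℳ (hf j x x.2) (by omega), decompose_of_mem_ne ℳ x.2 hji, map_zero]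
  | add m m' hm hm' => simp only [map_add, decompose_add, add_apply, AddMemClass.coe_add, hm, hm']

theorem SetLike.IsHomogeneous.mem_of_sub_self_mem {P : Type*} [SetLike P M]
    [AddSubgroupClass P M] {N : P} (hN : SetLike.IsHomogeneous ℳ N) {f : M →+ M}
    (hf : ∀ i, ∀ x ∈ ℳ i, f x ∈ ℳ (i + 1)) (hfN : ∀ x ∈ N, f x ∈ N) {m : M}
    (hm : f m - m ∈ N) : m ∈ N := by
  classical
  obtain ⟨b, hb⟩ := (decompose ℳ m).support.bddBelow
  obtain ⟨c, rfl⟩ : ∃ c, b = c + 1 := ⟨b - 1, by omega⟩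
  have below : ∀ i < c + 1, (decompose ℳ m i : M) ∈ N := fun i hi ↦ by
    rw [show decompose ℳ m i = 0 from DFinsupp.notMem_support_iff.mp fun h ↦ (hb h).not_gt hi]
    exact zero_mem N
  have step : ∀ i, (decompose ℳ m i : M) ∈ N → (decompose ℳ m (i + 1) : M) ∈ N := fun i hi ↦ by
    have h := hN (i + 1) hm
    rw [decompose_sub, DirectSum.sub_apply, AddSubgroupClass.coe_sub,
      decompose_apply_add_one_of_mapsTo ℳ hf] at h
    simpa using sub_mem (hfN _ hi) h
  have components : ∀ i, (decompose ℳ m i : M) ∈ N := fun i ↦ by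
    rcases lt_or_ge i (c + 1) with hi | hi
    · exact below i hi
    · induction i, hi using Int.leInduction with
      | base => exact step c (below c (by omega))
      | succ i _ ih => exact step i ih
  exact (AddSubmonoidClass.IsHomogeneous.mem_iff ℳ N hN).mpr components

end GradedShift

theorem Submodule.isHomogeneous_of_eq_iSup_inf {R M ι : Type*} [Ring R] [AddCommGroup M]
    [Module R M] [DecidableEq ι] (ℳ : ι → Submodule R M) [Decomposition ℳ] {p : Submodule R M}
    (hp : p = ⨆ i, p ⊓ ℳ i) : SetLike.IsHomogeneous ℳ p := by
  intro i m hm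
  rw [hp] at hm
  refine Submodule.iSup_induction _ (motive := fun x ↦ (decompose ℳ x i : M) ∈ p) hm ?_ ?_ ?_
  · intro j x hx
    rcases eq_or_ne j i with rfl | hji
    · rw [decompose_of_mem_same ℳ hx.2]; exact hx.1
    · rw [decompose_of_mem_ne ℳ hx.2 hji]; exact zero_mem p
  · simp
  · intro x y hx hy
    simpa using add_mem hx hy

section Quotient

variable {R M : Type*} [CommRing R] [AddCommGroup M] [Module R M] {N : Submodule R M} {r : R}

open LinearMap in
theorem Submodule.inf_range_lsmul_eq_map_lsmul (h : ∀ m, r • m ∈ N → m ∈ N) :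
    N ⊓ range (lsmul R M r) = N.map (lsmul R M r) := by
  refine le_antisymm ?_ fun x ⟨y, hy, hyx⟩ ↦ ⟨hyx ▸ N.smul_mem r hy, y, hyx⟩
  rintro _ ⟨hx, y, rfl⟩
  exact ⟨y, h y hx, rfl⟩

open LinearMap in
theorem Submodule.injective_mapQ_subtype_range_lsmul (h : ∀ m, r • m ∈ N → m ∈ N) :
    Function.Injective (mapQ (range (lsmul R N r)) (range (lsmul R M r)) N.subtype
      (by rintro x ⟨y, rfl⟩; exact ⟨y, rfl⟩)) := by
  rw [← ker_eq_bot, ker_eq_bot']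
  intro a ha
  obtain ⟨x, rfl⟩ := Quotient.mk_surjective _ a
  rw [mapQ_apply, Quotient.mk_eq_zero] at ha
  obtain ⟨y, hy⟩ := ha
  rw [lsmul_apply] at hy
  rw [Quotient.mk_eq_zero]
  exact ⟨⟨y, h y (hy ▸ x.2)⟩, Subtype.ext hy⟩

end Quotient

/-- Let `M` be a ℤ-graded module over `k[t]`: the grading is a family of
`k`-submodules `(Mᵢ)ᵢ` forming an internal direct sum decomposition of `M` and
satisfying `t · Mᵢ ⊆ M_{i+1}`.  Let `N ⊆ M` be a graded `k[t]`-submodule, i.e.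
`N = ⊕ᵢ (N ⊓ Mᵢ)`.  Then `N ⊓ (t−1)·M = (t−1)·N`; consequently the functor
`M ↦ M/(t−1)M` is exact on graded modules: the induced map
`N/(t−1)N → M/(t−1)M` is injective. -/
theorem statement13 (k : Type u) [Field k]
    (M : Type u) [AddCommGroup M] [Module (Polynomial k) M]
    [Module k M] [IsScalarTower k (Polynomial k) M]
    (Mi : ℤ → Submodule k M)
    (hinternal : DirectSum.IsInternal Mi)
    (hshift : ∀ (i : ℤ), ∀ x ∈ Mi i, (Polynomial.X : Polynomial k) • x ∈ Mi (i + 1))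
    (N : Submodule (Polynomial k) M)
    (hgraded : N.restrictScalars k = ⨆ i : ℤ, (N.restrictScalars k ⊓ Mi i)) :
    (N ⊓ LinearMap.range (LinearMap.lsmul (Polynomial k) M (Polynomial.X - 1)) =
      N.map (LinearMap.lsmul (Polynomial k) M (Polynomial.X - 1))) ∧
    Function.Injective (Submodule.mapQ
      (LinearMap.range (LinearMap.lsmul (Polynomial k) (↥N) (Polynomial.X - 1)))
      (LinearMap.range (LinearMap.lsmul (Polynomial k) M (Polynomial.X - 1)))
      N.subtype
      (by
        rintro x ⟨y, rfl⟩
        exact ⟨(y : M), rfl⟩)) := by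
  let := hinternal.chooseDecomposition
  have hN := Submodule.isHomogeneous_of_eq_iSup_inf Mi hgraded
  have mem_of_smul_mem (m : M) (hm : (Polynomial.X - 1 : Polynomial k) • m ∈ N) : m ∈ N :=
    SetLike.IsHomogeneous.mem_of_sub_self_mem Mi hN
      (f := DistribSMul.toAddMonoidHom M Polynomial.X) hshift
      (fun x hx ↦ N.smul_mem _ hx)
      (by simpa only [DistribSMul.toAddMonoidHom_apply, Submodule.restrictScalars_mem, sub_smul,
        one_smul] using hm)
  exact ⟨Submodule.inf_range_lsmul_eq_map_lsmul mem_of_smul_mem,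
    Submodule.injective_mapQ_subtype_range_lsmul mem_of_smul_mem⟩
end

section
/- Let A be a left noetherian ring and L a complete linear order with least element ⊥. Suppose dim assigns to every finitely generated left A-module an element of L, is invariant under A-module isomorphism, and satisfies: dim 0 = ⊥, and dim M = max(dim M′, dim M″) for every short exact sequence 0 → M′ → M → M″ → 0 of finitely generated left A-modules. Define, for an arbitrary left A-module M, Dim M := sup { dim N : N a finitely generated submodule of M }. Then Dim agrees with dim on finitely generated modules, Dim 0 = ⊥, Dim M = max(Dim M′, Dim M″) for every short exact sequence 0 → M′ → M → M″ → 0 of arbitrary left A-modules, and Dim is the unique isomorphism-invariant function on left A-modules extending dim which satisfies Dim M = sup { Dim M′ : M′ ⊆ M finitely generated } for all M. -/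
/-!
Exactness of `dim` on finitely generated modules already makes it monotone along injections
and surjections between them. Over a noetherian ring, a short exact sequence
`0 → M' → M → M'' → 0` restricts on every finitely generated `N ⊆ M` to the short exact
sequence `0 → f⁻¹(N) → N → g(N) → 0` of finitely generated modules, which bounds `Dim M` by
`max (Dim M') (Dim M'')`. Conversely, finitely generated submodules of `M'` map isomorphically
into `M`, and those of `M''` are images of finitely generated submodules of `M`.
-/

universe u v

/-- The canonical extension of a dimension function `dim` (defined on all modules, but
constrained only on finitely generated ones) to arbitrary modules:
`Dim M = sup { dim N : N a finitely generated submodule of M }`. -/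
noncomputable def DimExt (A : Type u) [Ring A] (L : Type v) [CompleteLinearOrder L]
    (dim : ∀ (M : Type u) [AddCommGroup M] [Module A M], L)
    (M : Type u) [AddCommGroup M] [Module A M] : L :=
  sSup {l : L | ∃ N : Submodule A M, N.FG ∧ l = dim ↥N}

namespace Submodule

variable {A M N : Type*} [Ring A] [AddCommGroup M] [Module A M] [AddCommGroup N] [Module A N]

theorem FG.exists_fg_map_eq_of_surjective {g : M →ₗ[A] N} (hg : Function.Surjective g)
    {P : Submodule A N} (hP : P.FG) : ∃ Q : Submodule A M, Q.FG ∧ Q.map g = P := by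
  obtain ⟨s, rfl⟩ := hP
  refine ⟨span A (Function.surjInv hg '' s),
    fg_def.mpr ⟨_, s.finite_toSet.image _, rfl⟩, ?_⟩
  rw [map_span, Set.image_image]
  simp only [Function.surjInv_eq hg, Set.image_id']

end Submodule

namespace LinearMap

variable {A M' M M'' : Type*} [Ring A] [AddCommGroup M'] [Module A M']
  [AddCommGroup M] [Module A M] [AddCommGroup M''] [Module A M'']

theorem range_restrict_comap_eq_ker_comp_subtype {f : M' →ₗ[A] M} {g : M →ₗ[A] M''}
    (hfg : range f = ker g) (N : Submodule A M) :
    range (f.restrict (p := N.comap f) (q := N) fun _ h => h) = ker (g ∘ₗ N.subtype) := by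
  ext ⟨x, hx⟩
  simp only [mem_range, restrict_apply, Subtype.ext_iff, Subtype.exists, Submodule.mem_comap,
    exists_prop]
  rw [mem_ker, comp_apply, N.subtype_apply, ← mem_ker, ← hfg]
  exact ⟨fun ⟨y, _, hy⟩ => ⟨y, hy⟩, fun ⟨y, hy⟩ => ⟨y, hy ▸ hx, hy⟩⟩

end LinearMap

section ExactDimension

variable {A : Type u} [Ring A] {L : Type v} [CompleteLinearOrder L]

def ExactOnFinite (dim : ∀ (M : Type u) [AddCommGroup M] [Module A M], L) : Prop :=
  ∀ (M' M M'' : Type u) [AddCommGroup M'] [Module A M'] [AddCommGroup M] [Module A M]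
    [AddCommGroup M''] [Module A M''],
    Module.Finite A M' → Module.Finite A M → Module.Finite A M'' →
    ∀ (f : M' →ₗ[A] M) (g : M →ₗ[A] M''),
      Function.Injective f → Function.Surjective g →
      LinearMap.range f = LinearMap.ker g →
      dim M = max (dim M') (dim M'')

variable {dim : ∀ (M : Type u) [AddCommGroup M] [Module A M], L}
variable {M' M M'' : Type u} [AddCommGroup M'] [Module A M'] [AddCommGroup M] [Module A M]
  [AddCommGroup M''] [Module A M'']

theorem le_dimExt {N : Submodule A M} (hN : N.FG) : dim N ≤ DimExt A L dim M :=
  le_sSup ⟨N, hN, rfl⟩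

theorem dimExt_le_iff {l : L} :
    DimExt A L dim M ≤ l ↔ ∀ N : Submodule A M, N.FG → dim N ≤ l := by
  simp only [DimExt, sSup_le_iff, Set.mem_ofPred_eq, forall_exists_index, and_imp]
  exact ⟨fun h N hN => h _ N hN rfl, fun h _ N hN hl => hl ▸ h N hN⟩

theorem dimExt_eq_bot_of_subsingleton
    (hzero : ∀ (M : Type u) [AddCommGroup M] [Module A M],
      Module.Finite A M → Subsingleton M → dim M = ⊥) [Subsingleton M] :
    DimExt A L dim M = ⊥ :=
  le_bot_iff.mp <| dimExt_le_iff.mpr fun N hN =>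
    (hzero N (Module.Finite.iff_fg.mpr hN) inferInstance).le

theorem eq_dimExt_of_eq_sSup_fg {D : ∀ (M : Type u) [AddCommGroup M] [Module A M], L}
    (hfin : ∀ (M : Type u) [AddCommGroup M] [Module A M], Module.Finite A M → D M = dim M)
    (hsup : D M = sSup {l : L | ∃ N : Submodule A M, N.FG ∧ l = D ↥N}) :
    D M = DimExt A L dim M := by
  rw [hsup, DimExt]
  congr! 5 with l N
  exact and_congr_right fun hN => by rw [hfin N (Module.Finite.iff_fg.mpr hN)]

variable [IsNoetherianRing A]

theorem dim_le_of_injective (hdim : ExactOnFinite dim) [Module.Finite A M] (f : M' →ₗ[A] M)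
    (hf : Function.Injective f) : dim M' ≤ dim M := by
  have : Module.Finite A M' := .of_injective f hf
  rw [hdim M' M (M ⧸ LinearMap.range f) ‹_› ‹_› inferInstance f (LinearMap.range f).mkQ hf
    (Submodule.mkQ_surjective _) (Submodule.ker_mkQ _).symm]
  exact le_max_left _ _

theorem dim_le_of_surjective (hdim : ExactOnFinite dim) [Module.Finite A M] (g : M →ₗ[A] M'')
    (hg : Function.Surjective g) : dim M'' ≤ dim M := by
  have : Module.Finite A M'' := .of_surjective g hg
  rw [hdim (LinearMap.ker g) M M'' inferInstance ‹_› ‹_› (LinearMap.ker g).subtype g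
    (Submodule.injective_subtype _) hg (Submodule.range_subtype _)]
  exact le_max_right _ _

theorem dimExt_eq_of_finite (hdim : ExactOnFinite dim) [Module.Finite A M] :
    DimExt A L dim M = dim M := by
  refine le_antisymm (dimExt_le_iff.mpr fun N _ => dim_le_of_injective hdim N.subtype
    N.injective_subtype) ?_
  calc dim M ≤ dim (⊤ : Submodule A M) :=
        dim_le_of_injective hdim Submodule.topEquiv.symm.toLinearMap
          Submodule.topEquiv.symm.injective
    _ ≤ DimExt A L dim M := le_dimExt (Module.finite_def.mp ‹_›)

theorem dimExt_le_of_injective (hdim : ExactOnFinite dim) (f : M' →ₗ[A] M)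
    (hf : Function.Injective f) : DimExt A L dim M' ≤ DimExt A L dim M := by
  refine dimExt_le_iff.mpr fun N hN => ?_
  have : Module.Finite A (N.map f) := Module.Finite.iff_fg.mpr (hN.map f)
  calc dim N ≤ dim (N.map f) := dim_le_of_injective hdim
        (Submodule.equivMapOfInjective f hf N).toLinearMap (LinearEquiv.injective _)
    _ ≤ DimExt A L dim M := le_dimExt (hN.map f)

theorem dimExt_le_of_surjective (hdim : ExactOnFinite dim) (g : M →ₗ[A] M'')
    (hg : Function.Surjective g) : DimExt A L dim M'' ≤ DimExt A L dim M := by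
  refine dimExt_le_iff.mpr fun P hP => ?_
  obtain ⟨N, hN, rfl⟩ := hP.exists_fg_map_eq_of_surjective hg
  have : Module.Finite A N := Module.Finite.iff_fg.mpr hN
  calc dim (N.map g) ≤ dim N :=
        dim_le_of_surjective hdim (g.submoduleMap N) (g.submoduleMap_surjective N)
    _ ≤ DimExt A L dim M := le_dimExt hN

theorem dimExt_le_max_of_exact (hdim : ExactOnFinite dim) {f : M' →ₗ[A] M} {g : M →ₗ[A] M''}
    (hf : Function.Injective f) (hfg : LinearMap.range f = LinearMap.ker g) :
    DimExt A L dim M ≤ max (DimExt A L dim M') (DimExt A L dim M'') := by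
  refine dimExt_le_iff.mpr fun N hN => ?_
  have : Module.Finite A N := Module.Finite.iff_fg.mpr hN
  let f₀ : N.comap f →ₗ[A] N := f.restrict fun _ h => h
  have hf₀ : Function.Injective f₀ := fun _ _ h => Subtype.ext (hf (congrArg Subtype.val h))
  have hcomap : (N.comap f).FG := Module.Finite.iff_fg.mp (.of_injective f₀ hf₀)
  let g₀ := (g ∘ₗ N.subtype).rangeRestrict
  have hexact : LinearMap.range f₀ = LinearMap.ker g₀ := by
    rw [LinearMap.ker_rangeRestrict]
    exact LinearMap.range_restrict_comap_eq_ker_comp_subtype hfg N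
  rw [hdim _ _ _ (Module.Finite.iff_fg.mpr hcomap) ‹_› inferInstance f₀ g₀ hf₀
    (LinearMap.surjective_rangeRestrict _) hexact]
  exact max_le_max (le_dimExt hcomap) (le_dimExt (Submodule.fg_range _))

theorem dimExt_eq_max_of_exact (hdim : ExactOnFinite dim) {f : M' →ₗ[A] M} {g : M →ₗ[A] M''}
    (hf : Function.Injective f) (hg : Function.Surjective g)
    (hfg : LinearMap.range f = LinearMap.ker g) :
    DimExt A L dim M = max (DimExt A L dim M') (DimExt A L dim M'') :=
  le_antisymm (dimExt_le_max_of_exact hdim hf hfg)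
    (max_le (dimExt_le_of_injective hdim f hf) (dimExt_le_of_surjective hdim g hg))

end ExactDimension

theorem statement14_general (A : Type u) [Ring A] [IsNoetherianRing A]
    (L : Type v) [CompleteLinearOrder L]
    (dim : ∀ (M : Type u) [AddCommGroup M] [Module A M], L)
    (hzero : ∀ (M : Type u) [AddCommGroup M] [Module A M],
      Module.Finite A M → Subsingleton M → dim M = ⊥)
    (hexact : ∀ (M' M M'' : Type u)
      [AddCommGroup M'] [Module A M'] [AddCommGroup M] [Module A M]
      [AddCommGroup M''] [Module A M''],
      Module.Finite A M' → Module.Finite A M → Module.Finite A M'' →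
      ∀ (f : M' →ₗ[A] M) (g : M →ₗ[A] M''),
        Function.Injective f → Function.Surjective g →
        LinearMap.range f = LinearMap.ker g →
        dim M = max (dim M') (dim M'')) :
    (∀ (M : Type u) [AddCommGroup M] [Module A M],
      Module.Finite A M → DimExt A L dim M = dim M) ∧
    (∀ (M : Type u) [AddCommGroup M] [Module A M],
      Subsingleton M → DimExt A L dim M = ⊥) ∧
    (∀ (M' M M'' : Type u)
      [AddCommGroup M'] [Module A M'] [AddCommGroup M] [Module A M]
      [AddCommGroup M''] [Module A M''],
      ∀ (f : M' →ₗ[A] M) (g : M →ₗ[A] M''),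
        Function.Injective f → Function.Surjective g →
        LinearMap.range f = LinearMap.ker g →
        DimExt A L dim M = max (DimExt A L dim M') (DimExt A L dim M'')) ∧
    (∀ (Dim' : ∀ (M : Type u) [AddCommGroup M] [Module A M], L),
      (∀ (M N : Type u) [AddCommGroup M] [Module A M] [AddCommGroup N] [Module A N],
        (M ≃ₗ[A] N) → Dim' M = Dim' N) →
      (∀ (M : Type u) [AddCommGroup M] [Module A M],
        Module.Finite A M → Dim' M = dim M) →
      (∀ (M : Type u) [AddCommGroup M] [Module A M],
        Dim' M = sSup {l : L | ∃ N : Submodule A M, N.FG ∧ l = Dim' ↥N}) →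
      ∀ (M : Type u) [AddCommGroup M] [Module A M], Dim' M = DimExt A L dim M) :=
  ⟨fun _ _ _ _ => dimExt_eq_of_finite hexact,
    fun _ _ _ _ => dimExt_eq_bot_of_subsingleton hzero,
    fun _ _ _ _ _ _ _ _ _ _ _ hf hg hfg => dimExt_eq_max_of_exact hexact hf hg hfg,
    fun _ _ hfin hsup M _ _ => eq_dimExt_of_eq_sSup_fg hfin (hsup M)⟩

/-- Let `A` be a left noetherian ring and `L` a complete linear order
with least element `⊥`.  Suppose `dim` assigns to every finitely generated left
`A`-module an element of `L`, is isomorphism-invariant, satisfies `dim 0 = ⊥`, and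
`dim M = max (dim M') (dim M'')` for every short exact sequence `0 → M' → M → M'' → 0`
of finitely generated modules.  Define `Dim M := sup { dim N : N ⊆ M f.g. }`.  Then
`Dim` agrees with `dim` on finitely generated modules, `Dim 0 = ⊥`, `Dim` is exact on
arbitrary short exact sequences, and `Dim` is the unique isomorphism-invariant
extension of `dim` satisfying `Dim M = sup { Dim M' : M' ⊆ M f.g. }`. -/
theorem statement14 (A : Type u) [Ring A] [IsNoetherianRing A]
    (L : Type v) [CompleteLinearOrder L]
    (dim : ∀ (M : Type u) [AddCommGroup M] [Module A M], L)
    (hiso : ∀ (M N : Type u) [AddCommGroup M] [Module A M] [AddCommGroup N] [Module A N],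
      Module.Finite A M → Module.Finite A N → (M ≃ₗ[A] N) → dim M = dim N)
    (hzero : ∀ (M : Type u) [AddCommGroup M] [Module A M],
      Module.Finite A M → Subsingleton M → dim M = ⊥)
    (hexact : ∀ (M' M M'' : Type u)
      [AddCommGroup M'] [Module A M'] [AddCommGroup M] [Module A M]
      [AddCommGroup M''] [Module A M''],
      Module.Finite A M' → Module.Finite A M → Module.Finite A M'' →
      ∀ (f : M' →ₗ[A] M) (g : M →ₗ[A] M''),
        Function.Injective f → Function.Surjective g →
        LinearMap.range f = LinearMap.ker g →
        dim M = max (dim M') (dim M'')) :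
    (∀ (M : Type u) [AddCommGroup M] [Module A M],
      Module.Finite A M → DimExt A L dim M = dim M) ∧
    (∀ (M : Type u) [AddCommGroup M] [Module A M],
      Subsingleton M → DimExt A L dim M = ⊥) ∧
    (∀ (M' M M'' : Type u)
      [AddCommGroup M'] [Module A M'] [AddCommGroup M] [Module A M]
      [AddCommGroup M''] [Module A M''],
      ∀ (f : M' →ₗ[A] M) (g : M →ₗ[A] M''),
        Function.Injective f → Function.Surjective g →
        LinearMap.range f = LinearMap.ker g →
        DimExt A L dim M = max (DimExt A L dim M') (DimExt A L dim M'')) ∧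
    (∀ (Dim' : ∀ (M : Type u) [AddCommGroup M] [Module A M], L),
      (∀ (M N : Type u) [AddCommGroup M] [Module A M] [AddCommGroup N] [Module A N],
        (M ≃ₗ[A] N) → Dim' M = Dim' N) →
      (∀ (M : Type u) [AddCommGroup M] [Module A M],
        Module.Finite A M → Dim' M = dim M) →
      (∀ (M : Type u) [AddCommGroup M] [Module A M],
        Dim' M = sSup {l : L | ∃ N : Submodule A M, N.FG ∧ l = Dim' ↥N}) →
      ∀ (M : Type u) [AddCommGroup M] [Module A M], Dim' M = DimExt A L dim M) :=
  statement14_general A L dim hzero hexact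
end
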